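/- Let d ∈ ℕ and let Q ∈ M_d(ℂ) be a strictly positive diagonal matrix whose diagonal takes exactly two distinct values q_1 ≠ q_2, and let J_1 = {j : Q_{jj} = q_1} and J_2 = {j : Q_{jj} = q_2}. Then a matrix A ∈ M_d(ℂ) belongs to sl_Q(d) if and only if A_{jk} = 0 whenever j and k lie in different sets J_1, J_2, and Σ_{j ∈ J_1} A_{jj} = 0 and Σ_{j ∈ J_2} A_{jj} = 0 (i.e., sl_Q(d) = sl(d_1) ⊕ sl(d_2), the block-diagonal matrices with both diagonal blocks of trace zero). -/

import Mathlib

/-!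
Commuting with the diagonal matrix `Q` forces `A` to vanish off the two diagonal blocks. Writing
`S₁, S₂` for the traces of those blocks, the two trace conditions read `q₁ S₁ + q₂ S₂ = 0` and
`S₁ / q₁ + S₂ / q₂ = 0`, a linear system of determinant `(q₂² - q₁²) / (q₁ q₂)`, which is nonzero
because `q₁, q₂` are distinct and positive.
-/

open Finset Matrix

namespace Matrix

variable {n R : Type*} [Fintype n] [DecidableEq n]

theorem mul_diagonal_eq_diagonal_mul_iff [CommRing R] [NoZeroDivisors R]
    (A : Matrix n n R) (v : n → R) :
    A * diagonal v = diagonal v * A ↔ ∀ j k, v j ≠ v k → A j k = 0 := by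
  simp only [← ext_iff, mul_diagonal, diagonal_mul]
  refine forall₂_congr fun j k => ⟨fun h hjk => ?_, fun h => ?_⟩
  · have h' : A j k * (v k - v j) = 0 := by linear_combination h
    exact (mul_eq_zero.mp h').resolve_right (sub_ne_zero.mpr hjk.symm)
  · by_cases hjk : v j = v k
    · rw [hjk, mul_comm]
    · simp [h hjk]

theorem trace_mul_diagonal [CommSemiring R] (A : Matrix n n R) (v : n → R) :
    (A * diagonal v).trace = ∑ j, A j j * v j := by
  simp only [trace, diag, mul_diagonal]

theorem inv_diagonal_of_ne_zero {K : Type*} [Field K] {v : n → K} (hv : ∀ j, v j ≠ 0) :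
    (diagonal v)⁻¹ = diagonal v⁻¹ :=
  inv_eq_right_inv <| by
    rw [diagonal_mul_diagonal, ← diagonal_one]
    exact congrArg diagonal (funext fun j => mul_inv_cancel₀ (hv j))

end Matrix

theorem Finset.sum_mul_comp_eq_of_two_valued {ι α R : Type*} [Fintype ι] [DecidableEq α]
    [CommSemiring R] {q : ι → α} {a b : α} (hab : a ≠ b) (hq : ∀ j, q j = a ∨ q j = b)
    (x : ι → R) (φ : α → R) :
    ∑ j, x j * φ (q j) =
      (∑ j with q j = a, x j) * φ a + (∑ j with q j = b, x j) * φ b := by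
  rw [← sum_fiberwise_of_maps_to (t := {a, b}) (g := q) (by simpa using hq), sum_pair hab]
  simp only [sum_mul]
  congr 1 <;> exact sum_congr rfl fun j hj => by rw [(mem_filter.mp hj).2]

theorem weighted_sums_eq_zero_iff {K : Type*} [Field K] {a b : K} (ha : a ≠ 0) (hb : b ≠ 0)
    (hab : a ≠ b) (hab' : a + b ≠ 0) {s t : K} :
    s * a + t * b = 0 ∧ s * a⁻¹ + t * b⁻¹ = 0 ↔ s = 0 ∧ t = 0 := by
  refine ⟨fun ⟨h, h'⟩ => ?_, fun ⟨hs, ht⟩ => by simp [hs, ht]⟩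
  have h'' : s * b + t * a = 0 := by
    field_simp at h'
    linear_combination h'
  have hst : s = t := by
    have : (a - b) * (s - t) = 0 := by linear_combination h - h''
    exact sub_eq_zero.mp ((mul_eq_zero.mp this).resolve_left (sub_ne_zero.mpr hab))
  subst hst
  have : s * (a + b) = 0 := by linear_combination h
  exact ⟨(mul_eq_zero.mp this).resolve_right hab', (mul_eq_zero.mp this).resolve_right hab'⟩

/-- For a strictly positive diagonal matrix `Q ∈ M_d(ℂ)` whose diagonal takes exactly two
distinct values `q₁ ≠ q₂`, a matrix `A` lies in `sl_Q(d)` iff `A` vanishes on the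
off-diagonal blocks and both diagonal blocks have trace zero. -/
theorem mem_slQ_iff_two_blocks
    (d : ℕ) (qd : Fin d → ℝ) (hpos : ∀ j, 0 < qd j)
    (q₁ q₂ : ℝ) (hne : q₁ ≠ q₂)
    (hcover : ∀ j, qd j = q₁ ∨ qd j = q₂)
    (h₁ : ∃ j, qd j = q₁) (h₂ : ∃ j, qd j = q₂)
    (A : Matrix (Fin d) (Fin d) ℂ) :
    (A * Matrix.diagonal (fun j => (qd j : ℂ)) =
        Matrix.diagonal (fun j => (qd j : ℂ)) * A ∧
      (A * Matrix.diagonal (fun j => (qd j : ℂ))).trace = 0 ∧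
      (A * (Matrix.diagonal (fun j => (qd j : ℂ)))⁻¹).trace = 0)
    ↔
    ((∀ j k, qd j ≠ qd k → A j k = 0) ∧
      ∑ j ∈ Finset.univ.filter (fun j => qd j = q₁), A j j = 0 ∧
      ∑ j ∈ Finset.univ.filter (fun j => qd j = q₂), A j j = 0) := by
  have hq₁ : 0 < q₁ := h₁.elim fun j hj => hj ▸ hpos j
  have hq₂ : 0 < q₂ := h₂.elim fun j hj => hj ▸ hpos j
  have hQ : ∀ j, (qd j : ℂ) ≠ 0 := fun j => Complex.ofReal_ne_zero.mpr (hpos j).ne'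
  rw [mul_diagonal_eq_diagonal_mul_iff, inv_diagonal_of_ne_zero hQ, trace_mul_diagonal,
    trace_mul_diagonal]
  simp only [ne_eq, Complex.ofReal_inj, Pi.inv_apply]
  rw [sum_mul_comp_eq_of_two_valued hne hcover (fun j => A j j) (fun t : ℝ => (t : ℂ)),
    sum_mul_comp_eq_of_two_valued hne hcover (fun j => A j j) (fun t : ℝ => (t : ℂ)⁻¹)]
  exact and_congr_right' <| weighted_sums_eq_zero_iff
    (Complex.ofReal_ne_zero.mpr hq₁.ne') (Complex.ofReal_ne_zero.mpr hq₂.ne')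
    (Complex.ofReal_injective.ne hne) (by exact_mod_cast (add_pos hq₁ hq₂).ne')
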